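/- Let X ∈ R^{n×p} and A_0 ∈ R^{p×T}, and let c > 0. Then inf over all A ∈ R^{p×T} of ‖XA − XA_0‖² + c·rank(A) equals inf over integers r ≥ 0 of ∑_{k ≥ r+1} σ_k(XA_0)² + c·r. -/

import Mathlib

open Matrix BigOperators

/-- Negated unsorted singular values of `M` (square roots of eigenvalues of `Mᴴ * M`). -/
noncomputable def negSvalsUnsorted {m n : ℕ} (M : Matrix (Fin m) (Fin n) ℝ) : Fin n → ℝ :=
  fun i => - Real.sqrt ((show (Mᵀ * M).IsHermitian by simpa [Matrix.conjTranspose_eq_transpose_of_trivial] using Matrix.isHermitian_conjTranspose_mul_self M).eigenvalues i)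

/-- The `k`-th largest singular value of `M` (`k` is 0-indexed, so `svals M 0 = σ₁(M)`). -/
noncomputable def svals {m n : ℕ} (M : Matrix (Fin m) (Fin n) ℝ) : Fin n → ℝ :=
  fun k => - negSvalsUnsorted M (Tuple.sort (negSvalsUnsorted M) k)

/-- The nuclear norm of `M`: sum of the singular values. -/
noncomputable def nucNorm {m n : ℕ} (M : Matrix (Fin m) (Fin n) ℝ) : ℝ := ∑ k, svals M k

/-- The Frobenius (Hilbert–Schmidt) norm of `M`. -/
noncomputable def frobNorm {m n : ℕ} (M : Matrix (Fin m) (Fin n) ℝ) : ℝ :=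
  Real.sqrt (∑ i, ∑ j, (M i j)^2)


/-!
The infimum on the left is attained along ranks: for a fixed `r`, the best `‖XA - XA₀‖²` with
`rank A ≤ r` is the Eckart–Young tail `∑_{k ≥ r} σ_k(XA₀)²`. The lower bound holds for every
`B = XA` of rank at most `r`: if `P` is the orthogonal projection onto the row space of `B`, then
`‖B - M‖² ≥ ‖(B - M)(1 - P)‖² = ‖M‖² - tr(MᵀM P)`, and Ky Fan's inequality
`tr(MᵀM P) ≤ ∑_{k < r} σ_k(M)²` follows from the diagonal of `VᵀPV` (with `MᵀM = V Σ² Vᵀ`) lying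
in `[0, 1]` and summing to `tr P ≤ r`. The bound is attained by `A = A₀ P` where `P` projects onto
the top `r` right singular vectors of `M = XA₀`.
-/

open Finset Matrix

theorem Finset.sum_mul_le_sum_filter_val_lt {n : ℕ} {μ t : Fin n → ℝ} (hμ : Antitone μ)
    (hμ0 : ∀ k, 0 ≤ μ k) (ht : ∀ k, t k ∈ Set.Icc 0 1) {s : ℕ} (hts : ∑ k, t k ≤ s) :
    ∑ k, μ k * t k ≤ ∑ k ∈ univ.filter (fun k : Fin n => (k : ℕ) < s), μ k := by
  -- `b` is the largest weight not counted on the right (or `0` if there is none)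
  obtain ⟨b, hb_le, hb_ge, hb⟩ : ∃ b, (∀ k : Fin n, (k : ℕ) < s → b ≤ μ k) ∧
      (∀ k : Fin n, s ≤ (k : ℕ) → μ k ≤ b) ∧ b * (∑ k, t k - #{k : Fin n | (k : ℕ) < s}) ≤ 0 := by
    by_cases hs : s < n
    · refine ⟨μ ⟨s, hs⟩, fun k hk => hμ (Fin.mk_le_of_le_val hk.le),
        fun k hk => hμ (Fin.le_def.2 hk), ?_⟩
      rw [Fin.card_filter_val_lt, min_eq_right hs.le]
      exact mul_nonpos_of_nonneg_of_nonpos (hμ0 _) (by linarith)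
    · exact ⟨0, fun k _ => hμ0 k, fun k hk => absurd (hk.trans_lt k.2) hs, by simp⟩
  have hpoint : ∀ k : Fin n, μ k * t k ≤
      (if (k : ℕ) < s then μ k else 0) + b * (t k - if (k : ℕ) < s then 1 else 0) := by
    intro k
    obtain ⟨ht0, ht1⟩ := ht k
    split_ifs with hk
    · nlinarith [hb_le k hk]
    · nlinarith [hb_ge k (not_lt.1 hk)]
  calc ∑ k, μ k * t k
      ≤ ∑ k : Fin n,
          ((if (k : ℕ) < s then μ k else 0) + b * (t k - if (k : ℕ) < s then 1 else 0)) :=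
        sum_le_sum fun k _ => hpoint k
    _ = ∑ k ∈ univ.filter (fun k : Fin n => (k : ℕ) < s), μ k +
          b * (∑ k, t k - #{k : Fin n | (k : ℕ) < s}) := by
        rw [sum_add_distrib, ← mul_sum, sum_sub_distrib, sum_ite, sum_ite, sum_const_zero]
        simp
    _ ≤ ∑ k ∈ univ.filter (fun k : Fin n => (k : ℕ) < s), μ k := by linarith

section StarProjection

variable {n : Type*} [Fintype n]

theorem IsStarProjection.transpose_eq {P : Matrix n n ℝ} (hP : IsStarProjection P) : Pᵀ = P := by
  simpa [star_eq_conjTranspose] using hP.isSelfAdjoint.star_eq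

theorem IsStarProjection.diag_mem_Icc {P : Matrix n n ℝ} (hP : IsStarProjection P) (j : n) :
    P j j ∈ Set.Icc 0 1 := by
  have hsum : P j j = ∑ i, P i j ^ 2 := by
    conv_lhs => rw [← hP.isIdempotentElem.eq]
    simp only [mul_apply, sq]
    refine sum_congr rfl fun i _ => ?_
    rw [← transpose_apply P j i, hP.transpose_eq]
  have hsq : P j j ^ 2 ≤ P j j := hsum ▸ single_le_sum (fun i _ => sq_nonneg (P i j)) (mem_univ j)
  constructor <;> nlinarith [sq_nonneg (P j j)]

variable [DecidableEq n]

theorem IsStarProjection.transpose_mul_mul {P V : Matrix n n ℝ} (hP : IsStarProjection P)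
    (hV : V * Vᵀ = 1) : IsStarProjection (Vᵀ * P * V) := by
  rw [isStarProjection_iff', star_eq_conjTranspose, conjTranspose_eq_transpose_of_trivial]
  constructor
  · calc Vᵀ * P * V * (Vᵀ * P * V) = Vᵀ * (P * (V * Vᵀ) * P) * V := by simp only [Matrix.mul_assoc]
      _ = Vᵀ * P * V := by rw [hV, Matrix.mul_one, hP.isIdempotentElem.eq, Matrix.mul_assoc]
  · rw [transpose_mul, transpose_mul, transpose_transpose, hP.transpose_eq, Matrix.mul_assoc]

theorem Matrix.isStarProjection_diagonal_ite (s : Finset n) :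
    IsStarProjection (diagonal fun j => if j ∈ s then (1 : ℝ) else 0) := by
  rw [isStarProjection_iff', star_eq_conjTranspose, diagonal_conjTranspose, diagonal_mul_diagonal]
  constructor
  · congr 1; ext j; split_ifs <;> norm_num
  · rfl

end StarProjection

section Trace

variable {m n : Type*} [Fintype m] [Fintype n]

theorem Matrix.trace_transpose_mul_self_nonneg (C : Matrix m n ℝ) : 0 ≤ trace (Cᵀ * C) := by
  simpa [conjTranspose_eq_transpose_of_trivial] using
    (posSemidef_conjTranspose_mul_self C).trace_nonneg

theorem Matrix.trace_transpose_mul_self_mul_eq {C : Matrix m n ℝ} {P : Matrix n n ℝ}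
    (hP : IsStarProjection P) : trace (Cᵀ * C * P) = trace ((C * P)ᵀ * (C * P)) := by
  conv_lhs => rw [← hP.isIdempotentElem.eq, ← Matrix.mul_assoc, trace_mul_comm]
  rw [transpose_mul, hP.transpose_eq]
  simp only [Matrix.mul_assoc]

theorem Matrix.trace_transpose_mul_self_sub_mul (C : Matrix m n ℝ) {P : Matrix n n ℝ}
    [DecidableEq n] (hP : IsStarProjection P) :
    trace ((C - C * P)ᵀ * (C - C * P)) = trace (Cᵀ * C) - trace (Cᵀ * C * P) := by
  rw [show C - C * P = C * (1 - P) by rw [Matrix.mul_sub, Matrix.mul_one],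
    ← trace_transpose_mul_self_mul_eq hP.one_sub, Matrix.mul_sub, Matrix.mul_one, trace_sub]

theorem Matrix.trace_mul_diagonal_mul_transpose_mul {R : Type*} [CommRing R] [DecidableEq n]
    (V : Matrix n n R) (w : n → R) (P : Matrix n n R) :
    trace (V * diagonal w * Vᵀ * P) = ∑ k, w k * (Vᵀ * P * V) k k := by
  rw [Matrix.mul_assoc, trace_mul_cycle, trace_mul_comm]
  simp only [trace, diag, diagonal_mul]

theorem Matrix.trace_mul_diagonal_mul_transpose {R : Type*} [CommRing R] [DecidableEq n]
    {V : Matrix n n R} (hV : Vᵀ * V = 1) (w : n → R) :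
    trace (V * diagonal w * Vᵀ) = ∑ k, w k := by
  rw [trace_mul_cycle, hV, Matrix.one_mul, trace_diagonal]

end Trace

section ColumnProjection

variable {n : Type*} [Fintype n] [DecidableEq n]

/-- The orthogonal projection onto the span of the columns of `V` indexed by `s`,
when `V` is orthogonal. -/
noncomputable def Matrix.columnProj (V : Matrix n n ℝ) (s : Finset n) : Matrix n n ℝ :=
  V * diagonal (fun j => if j ∈ s then 1 else 0) * Vᵀ

theorem Matrix.isStarProjection_columnProj {V : Matrix n n ℝ} (hV : Vᵀ * V = 1) (s : Finset n) :
    IsStarProjection (columnProj V s) := by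
  simpa [columnProj] using
    (isStarProjection_diagonal_ite s).transpose_mul_mul (V := Vᵀ) (by simpa using hV)

theorem Matrix.trace_columnProj {V : Matrix n n ℝ} (hV : Vᵀ * V = 1) (s : Finset n) :
    trace (columnProj V s) = #s := by
  rw [columnProj, trace_mul_diagonal_mul_transpose hV, sum_boole, filter_mem_eq_inter, univ_inter]

theorem Matrix.rank_columnProj_le (V : Matrix n n ℝ) (s : Finset n) : (columnProj V s).rank ≤ #s :=
  calc (columnProj V s).rank
      ≤ (diagonal fun j => if j ∈ s then (1 : ℝ) else 0).rank :=
        (rank_mul_le_left _ _).trans (rank_mul_le_right _ _)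
    _ = #s := by
        rw [rank_diagonal, Fintype.card_subtype]
        congr 1
        ext j
        simp

theorem Matrix.trace_mul_diagonal_mul_transpose_mul_columnProj {V : Matrix n n ℝ}
    (hV : Vᵀ * V = 1) (w : n → ℝ) (s : Finset n) :
    trace (V * diagonal w * Vᵀ * columnProj V s) = ∑ k ∈ s, w k := by
  have hconj : Vᵀ * columnProj V s * V = diagonal fun j => if j ∈ s then 1 else 0 := by
    simp only [columnProj, ← Matrix.mul_assoc, hV, Matrix.one_mul]
    rw [Matrix.mul_assoc, hV, Matrix.mul_one]
  rw [trace_mul_diagonal_mul_transpose_mul, hconj]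
  simp

end ColumnProjection

theorem Matrix.isHermitian_transpose_mul_self {m n : Type*} [Fintype m] (M : Matrix m n ℝ) :
    (Mᵀ * M).IsHermitian := by
  simpa [conjTranspose_eq_transpose_of_trivial] using isHermitian_conjTranspose_mul_self M

theorem Matrix.IsHermitian.exists_orthogonal_diagonalization {n : Type*} [Fintype n]
    [DecidableEq n] {S : Matrix n n ℝ} (hS : S.IsHermitian) :
    ∃ V : Matrix n n ℝ, Vᵀ * V = 1 ∧ S = V * diagonal hS.eigenvalues * Vᵀ := by
  refine ⟨hS.eigenvectorUnitary, ?_, ?_⟩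
  · simpa [star_eq_conjTranspose, conjTranspose_eq_transpose_of_trivial] using
      Unitary.coe_star_mul_self hS.eigenvectorUnitary
  · conv_lhs => rw [hS.spectral_theorem]
    simp [star_eq_conjTranspose, conjTranspose_eq_transpose_of_trivial]

theorem Matrix.exists_isStarProjection_mul_eq_self {m n : Type*} [Fintype m] [Fintype n]
    [DecidableEq n] (B : Matrix m n ℝ) :
    ∃ P : Matrix n n ℝ, IsStarProjection P ∧ B * P = B ∧ trace P = B.rank := by
  have hB := isHermitian_transpose_mul_self B
  obtain ⟨V, hV, hBV⟩ := hB.exists_orthogonal_diagonalization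
  have hrank : B.rank = #{j | hB.eigenvalues j ≠ 0} := by
    rw [← rank_transpose_mul_self, hB.rank_eq_card_non_zero_eigs, Fintype.card_subtype]
  generalize hB.eigenvalues = μ at hBV hrank
  set s : Finset n := {j | μ j ≠ 0}
  have hP := isStarProjection_columnProj hV s
  refine ⟨columnProj V s, hP, ?_, by rw [trace_columnProj hV, hrank]⟩
  -- `B (1 - P)` has Gram trace `∑_{μ j = 0} μ j = 0`
  have hgram : trace ((B - B * columnProj V s)ᵀ * (B - B * columnProj V s)) = 0 := by
    rw [trace_transpose_mul_self_sub_mul B hP, hBV,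
      trace_mul_diagonal_mul_transpose_mul_columnProj hV, trace_mul_diagonal_mul_transpose hV,
      sub_eq_zero, sum_filter_ne_zero]
  rw [← conjTranspose_eq_transpose_of_trivial, trace_conjTranspose_mul_self_eq_zero_iff] at hgram
  exact (sub_eq_zero.1 hgram).symm

section SingularValues

variable {m n : ℕ}

theorem svals_sq (M : Matrix (Fin m) (Fin n) ℝ) (k : Fin n) :
    svals M k ^ 2 =
      (isHermitian_transpose_mul_self M).eigenvalues (Tuple.sort (negSvalsUnsorted M) k) := by
  have hpsd : (Mᵀ * M).PosSemidef := by
    simpa [conjTranspose_eq_transpose_of_trivial] using posSemidef_conjTranspose_mul_self M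
  simpa [svals, negSvalsUnsorted] using Real.sq_sqrt (hpsd.eigenvalues_nonneg _)

theorem svals_nonneg (M : Matrix (Fin m) (Fin n) ℝ) (k : Fin n) : 0 ≤ svals M k := by
  simp [svals, negSvalsUnsorted, Real.sqrt_nonneg]

theorem svals_antitone (M : Matrix (Fin m) (Fin n) ℝ) : Antitone (svals M) :=
  (Tuple.monotone_sort (negSvalsUnsorted M)).neg

theorem svals_sq_antitone (M : Matrix (Fin m) (Fin n) ℝ) : Antitone fun k => svals M k ^ 2 :=
  fun _ _ hkl => pow_le_pow_left₀ (svals_nonneg M _) (svals_antitone M hkl) 2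

theorem exists_orthogonal_transpose_mul_self_eq (M : Matrix (Fin m) (Fin n) ℝ) :
    ∃ V : Matrix (Fin n) (Fin n) ℝ,
      Vᵀ * V = 1 ∧ Mᵀ * M = V * diagonal (fun k => svals M k ^ 2) * Vᵀ := by
  obtain ⟨V, hV, hMV⟩ := (isHermitian_transpose_mul_self M).exists_orthogonal_diagonalization
  set σ := Tuple.sort (negSvalsUnsorted M)
  refine ⟨V.submatrix id σ, ?_, ?_⟩
  · simpa [hV, submatrix_one_equiv] using submatrix_mul_equiv Vᵀ V σ (Equiv.refl _) σ
  · have hdiag : diagonal (fun k => svals M k ^ 2) =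
        (diagonal (isHermitian_transpose_mul_self M).eigenvalues).submatrix σ σ := by
      rw [submatrix_diagonal_equiv]
      exact congrArg diagonal (funext (svals_sq M))
    rw [hdiag, transpose_submatrix, submatrix_mul_equiv, submatrix_mul_equiv]
    exact hMV

theorem sum_svals_sq_filter_le_eq (M : Matrix (Fin m) (Fin n) ℝ) (s : ℕ) :
    ∑ k ∈ univ.filter (fun k : Fin n => s ≤ (k : ℕ)), svals M k ^ 2 =
      trace (Mᵀ * M) - ∑ k ∈ univ.filter (fun k : Fin n => (k : ℕ) < s), svals M k ^ 2 := by
  obtain ⟨V, hV, hMV⟩ := exists_orthogonal_transpose_mul_self_eq M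
  rw [hMV, trace_mul_diagonal_mul_transpose hV, eq_sub_iff_add_eq, add_comm]
  simp only [← not_lt]
  exact sum_filter_add_sum_filter_not _ _ _

/-- Ky Fan's maximum principle, for the eigenvalues `σ_k(M)²` of `MᵀM`. -/
theorem trace_transpose_mul_self_mul_le (M : Matrix (Fin m) (Fin n) ℝ)
    {P : Matrix (Fin n) (Fin n) ℝ} (hP : IsStarProjection P) {s : ℕ} (hs : trace P ≤ s) :
    trace (Mᵀ * M * P) ≤ ∑ k ∈ univ.filter (fun k : Fin n => (k : ℕ) < s), svals M k ^ 2 := by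
  obtain ⟨V, hV, hMV⟩ := exists_orthogonal_transpose_mul_self_eq M
  have hV' : V * Vᵀ = 1 := mul_eq_one_comm.mp hV
  rw [hMV, trace_mul_diagonal_mul_transpose_mul]
  refine sum_mul_le_sum_filter_val_lt (svals_sq_antitone M) (fun k => sq_nonneg _)
    (hP.transpose_mul_mul hV').diag_mem_Icc ?_
  calc ∑ k, (Vᵀ * P * V) k k = trace P := by
        change trace (Vᵀ * P * V) = _
        rw [trace_mul_cycle, hV', Matrix.one_mul]
    _ ≤ s := hs

end SingularValues

section EckartYoung

variable {m n : ℕ}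

theorem frobNorm_sq_eq_trace (C : Matrix (Fin m) (Fin n) ℝ) : frobNorm C ^ 2 = trace (Cᵀ * C) := by
  rw [frobNorm, Real.sq_sqrt (by positivity), trace, sum_comm]
  simp [mul_apply, sq]

theorem frobNorm_sub_comm (A B : Matrix (Fin m) (Fin n) ℝ) :
    frobNorm (A - B) = frobNorm (B - A) := by
  simp only [frobNorm, Matrix.sub_apply]
  congr! 3 with i _ j _
  ring

theorem sum_svals_sq_filter_le_le_frobNorm_sq (M B : Matrix (Fin m) (Fin n) ℝ) {s : ℕ}
    (hB : B.rank ≤ s) :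
    ∑ k ∈ univ.filter (fun k : Fin n => s ≤ (k : ℕ)), svals M k ^ 2 ≤ frobNorm (B - M) ^ 2 := by
  obtain ⟨P, hP, hBP, htr⟩ := exists_isStarProjection_mul_eq_self B
  have hKyFan := trace_transpose_mul_self_mul_le M hP (s := s) (by rw [htr]; exact_mod_cast hB)
  have hnonneg : 0 ≤ trace ((M - B)ᵀ * (M - B) * P) := by
    rw [trace_transpose_mul_self_mul_eq hP]
    exact trace_transpose_mul_self_nonneg _
  calc ∑ k ∈ univ.filter (fun k : Fin n => s ≤ (k : ℕ)), svals M k ^ 2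
      ≤ trace (Mᵀ * M) - trace (Mᵀ * M * P) := by rw [sum_svals_sq_filter_le_eq]; linarith
    _ = trace ((M - B - (M - B) * P)ᵀ * (M - B - (M - B) * P)) := by
        rw [Matrix.sub_mul, hBP, sub_sub_sub_cancel_right, trace_transpose_mul_self_sub_mul M hP]
    _ ≤ trace ((M - B)ᵀ * (M - B)) := by rw [trace_transpose_mul_self_sub_mul _ hP]; linarith
    _ = frobNorm (B - M) ^ 2 := by rw [frobNorm_sub_comm, frobNorm_sq_eq_trace]

theorem exists_rank_le_frobNorm_mul_sub_sq_eq (M : Matrix (Fin m) (Fin n) ℝ) (r : ℕ) :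
    ∃ P : Matrix (Fin n) (Fin n) ℝ, P.rank ≤ r ∧
      frobNorm (M * P - M) ^ 2 =
        ∑ k ∈ univ.filter (fun k : Fin n => r ≤ (k : ℕ)), svals M k ^ 2 := by
  obtain ⟨V, hV, hMV⟩ := exists_orthogonal_transpose_mul_self_eq M
  set s : Finset (Fin n) := univ.filter fun k => (k : ℕ) < r
  refine ⟨columnProj V s, ?_, ?_⟩
  · calc (columnProj V s).rank ≤ #s := rank_columnProj_le V s
      _ ≤ r := by rw [Fin.card_filter_val_lt]; exact min_le_right _ _
  · rw [frobNorm_sub_comm, frobNorm_sq_eq_trace,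
      trace_transpose_mul_self_sub_mul M (isStarProjection_columnProj hV s),
      sum_svals_sq_filter_le_eq, hMV, trace_mul_diagonal_mul_transpose_mul_columnProj hV]

end EckartYoung

/-- for `X ∈ ℝ^{n×p}`, `A₀ ∈ ℝ^{p×T}` and `c > 0`,
`inf_A {‖XA − XA₀‖² + c·rank A} = inf_r {∑_{k ≥ r+1} σ_k(XA₀)² + c·r}`
(0-indexed: the inner sum runs over indices `k ≥ r`). -/
theorem inf_penalized_rank_eq {n p T : ℕ} (X : Matrix (Fin n) (Fin p) ℝ)
    (A₀ : Matrix (Fin p) (Fin T) ℝ) (c : ℝ) (hc : 0 < c) :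
    sInf {x : ℝ | ∃ A : Matrix (Fin p) (Fin T) ℝ,
        x = frobNorm (X * A - X * A₀) ^ 2 + c * A.rank} =
      sInf {x : ℝ | ∃ r : ℕ,
        x = (∑ k ∈ Finset.univ.filter (fun k : Fin T => r ≤ (k : ℕ)),
              svals (X * A₀) k ^ 2) + c * r} := by
  apply csInf_eq_csInf_of_forall_exists_le
  · rintro _ ⟨A, rfl⟩
    refine ⟨_, ⟨A.rank, rfl⟩, ?_⟩
    gcongr
    exact sum_svals_sq_filter_le_le_frobNorm_sq _ _ (rank_mul_le_right X A)
  · rintro _ ⟨r, rfl⟩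
    obtain ⟨P, hPr, hP⟩ := exists_rank_le_frobNorm_mul_sub_sq_eq (X * A₀) r
    refine ⟨_, ⟨A₀ * P, rfl⟩, ?_⟩
    rw [← Matrix.mul_assoc, hP]
    gcongr
    exact (rank_mul_le_right A₀ P).trans hPr
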